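/- Let γ : (0,1] → [0,∞) be measurable with ∫₀¹ s γ(s) ds < ∞, and set M = 2∫₀¹ s² γ(s) ds. Let C : ℝ × ℝ → ℝ be continuously differentiable and symmetric, i.e. C(x,y) = C(y,x) for all x, y, and let σ(t) = C(t,t) (so σ is continuously differentiable). Let x ∈ ℝ and let u : ℝ → ℝ be twice continuously differentiable on a neighborhood of x. Then lim_{δ→0⁺} δ^{-3} ∫_{x−δ}^{x+δ} C(x,y) γ(|y−x|/δ) (u(y) − u(x)) dy = (M/2) · (σ(x) u''(x) + σ'(x) u'(x)), i.e. (M/2) times the divergence-form operator (σ u')'(x). -/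

import Mathlib

open MeasureTheory Filter Set Asymptotics
open scoped Topology

/-!
Substituting `y = x + δ s` and folding `s ↦ -s` turns the integral into `δ ∫₀¹ γ(s) G(δ s) ds`,
where `G h = H h + H (-h)` and `H h = C(x, x + h) (u(x + h) - u x)`. Since `G` is a symmetric
second difference of a product, `G h / h²` tends to `C(x,x) u''(x) + 2 ∂₂C(x,x) u'(x)` (for the
second difference of `u` alone this is L'Hôpital), and `2 ∂₂C(x,x) = σ'(x)` by the symmetry of `C`.
In particular `|G h| ≤ K h²` near `0`, so `γ(s) G(δ s) / δ²` is dominated by `K s |γ(s)|` and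
dominated convergence gives the limit `(∫₀¹ s² γ) (σ u'' + σ' u')(x)`.
-/

section Slopes

variable {f : ℝ → ℝ} {a x : ℝ}

theorem HasDerivAt.tendsto_add_sub_div (hf : HasDerivAt f a x) :
    Tendsto (fun h => (f (x + h) - f x) / h) (𝓝[≠] 0) (𝓝 a) := by
  simpa only [smul_eq_mul, inv_mul_eq_div] using hf.tendsto_slope_zero

theorem HasDerivAt.tendsto_sub_sub_div (hf : HasDerivAt f a x) :
    Tendsto (fun h => (f (x - h) - f x) / h) (𝓝[≠] 0) (𝓝 (-a)) := by
  have := (HasDerivAt.comp_const_sub x 0 (by rwa [sub_zero])).tendsto_add_sub_div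
  simpa only [zero_add, sub_zero] using this

end Slopes

theorem tendsto_second_symmDiff {u : ℝ → ℝ} {x a : ℝ}
    (hu : ∀ᶠ y in 𝓝 x, DifferentiableAt ℝ u y) (hu' : HasDerivAt (deriv u) a x) :
    Tendsto (fun h => (u (x + h) + u (x - h) - 2 * u x) / h ^ 2) (𝓝[≠] 0) (𝓝 a) := by
  have hshift : ∀ᶠ h in 𝓝 (0 : ℝ), DifferentiableAt ℝ u (x + h) ∧ DifferentiableAt ℝ u (x - h) :=
    ((continuous_const_add x).tendsto' 0 x (add_zero x)).eventually hu |>.and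
      (((continuous_sub_left x).tendsto' 0 x (sub_zero x)).eventually hu)
  have hderiv : ∀ᶠ h in 𝓝 (0 : ℝ), HasDerivAt (fun h => u (x + h) + u (x - h) - 2 * u x)
      (deriv u (x + h) - deriv u (x - h)) h := hshift.mono fun h ⟨hp, hm⟩ =>
    (((hp.hasDerivAt.comp_const_add x h).add (hm.hasDerivAt.comp_const_sub x h)).sub_const
      (2 * u x)).congr_deriv (sub_eq_add_neg _ _).symm
  have hdiv : Tendsto (fun h => (deriv u (x + h) - deriv u (x - h)) / (2 * h)) (𝓝[≠] 0) (𝓝 a) := by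
    convert (hu'.tendsto_add_sub_div.sub hu'.tendsto_sub_sub_div).div_const 2 using 2 <;> ring
  refine HasDerivAt.lhopital_zero_nhdsNE (eventually_nhdsWithin_of_eventually_nhds hderiv)
    (.of_forall fun h => by simpa using hasDerivAt_pow 2 h)
    (eventually_nhdsWithin_of_forall fun h hh => mul_ne_zero two_ne_zero hh) ?_ ?_ hdiv
  · have := hderiv.self_of_nhds.continuousAt.tendsto.mono_left (nhdsWithin_le_nhds (s := {0}ᶜ))
    rwa [add_zero, sub_zero, ← two_mul, sub_self] at this
  · simpa using ((continuous_pow 2).tendsto' (0 : ℝ) 0 (zero_pow two_ne_zero)).mono_left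
      nhdsWithin_le_nhds

theorem tendsto_second_symmDiff_mul {c w : ℝ → ℝ} {x a b q : ℝ} (hc : HasDerivAt c a x)
    (hw : HasDerivAt w b x) (hw0 : w x = 0)
    (hq : Tendsto (fun h => (w (x + h) + w (x - h)) / h ^ 2) (𝓝[≠] 0) (𝓝 q)) :
    Tendsto (fun h => (c (x + h) * w (x + h) + c (x - h) * w (x - h)) / h ^ 2) (𝓝[≠] 0)
      (𝓝 (c x * q + 2 * a * b)) := by
  have := (hq.const_mul (c x)).add ((hc.tendsto_add_sub_div.mul hw.tendsto_add_sub_div).add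
    (hc.tendsto_sub_sub_div.mul hw.tendsto_sub_sub_div))
  rw [neg_mul_neg, ← two_mul, ← mul_assoc] at this
  refine this.congr' (eventually_nhdsWithin_of_forall fun h (hh : h ≠ 0) => ?_)
  rw [hw0]
  field_simp
  ring

theorem hasDerivAt_diag_of_symm {F : ℝ → ℝ → ℝ} {x a : ℝ}
    (hF : DifferentiableAt ℝ (fun p : ℝ × ℝ => F p.1 p.2) (x, x)) (hsymm : ∀ y z, F y z = F z y)
    (hx : HasDerivAt (F x) a x) : HasDerivAt (fun t => F t t) (2 * a) x := by
  set L := fderiv ℝ (fun p : ℝ × ℝ => F p.1 p.2) (x, x)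
  have hsnd : HasDerivAt (F x) (L (0, 1)) x :=
    hF.hasFDerivAt.comp_hasDerivAt x ((hasDerivAt_const x x).prodMk (hasDerivAt_id x))
  have hfst : HasDerivAt (fun t => F t x) (L (1, 0)) x :=
    hF.hasFDerivAt.comp_hasDerivAt (f := fun t => (t, x)) x
      ((hasDerivAt_id x).prodMk (hasDerivAt_const x x))
  simp only [hsymm _ x] at hfst
  have hdiag : HasDerivAt (fun t => F t t) (L (1, 1)) x :=
    hF.hasFDerivAt.comp_hasDerivAt (f := fun t => (t, t)) x
      ((hasDerivAt_id x).prodMk (hasDerivAt_id x))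
  have hsplit : ((1 : ℝ), (1 : ℝ)) = (1, 0) + (0, 1) := by simp
  rwa [hsplit, map_add, hfst.unique hx, hsnd.unique hx, ← two_mul] at hdiag

theorem intervalIntegral_radial_eq_integral_Ioc (γ H : ℝ → ℝ) (x : ℝ) {δ : ℝ} (hδ : 0 < δ)
    (hp : IntegrableOn (fun s => γ s * H (δ * s)) (Ioc 0 1))
    (hm : IntegrableOn (fun s => γ s * H (-(δ * s))) (Ioc 0 1)) :
    ∫ y in (x - δ)..(x + δ), γ (|y - x| / δ) * H (y - x) =
      δ * ∫ s in Ioc 0 1, γ s * (H (δ * s) + H (-(δ * s))) := by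
  set g : ℝ → ℝ := fun s => γ |s| * H (δ * s)
  have hg : EqOn g (fun s => γ s * H (δ * s)) (Ioc 0 1) := fun s hs => by
    simp only [g, abs_of_pos hs.1]
  have hg_neg : EqOn (fun s => g (-s)) (fun s => γ s * H (-(δ * s))) (Ioc 0 1) := fun s hs => by
    simp only [g, abs_neg, abs_of_pos hs.1, mul_neg]
  have hgp : IntervalIntegrable g volume 0 1 :=
    (intervalIntegrable_iff_integrableOn_Ioc_of_le zero_le_one).2
      (hp.congr_fun hg.symm measurableSet_Ioc)
  have hgm : IntervalIntegrable g volume (-1) 0 := by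
    have := (intervalIntegrable_iff_integrableOn_Ioc_of_le zero_le_one).2
      (hm.congr_fun hg_neg.symm measurableSet_Ioc)
    simpa using ((IntervalIntegrable.iff_comp_neg (f := fun s => g (-s))).1 this).symm
  have hcov : ∫ y in (x - δ)..(x + δ), γ (|y - x| / δ) * H (y - x) =
      δ * ∫ s in (-1)..1, g s := by
    have hF : ∀ s, γ (|δ * s + x - x| / δ) * H (δ * s + x - x) = g s := fun s => by
      rw [add_sub_cancel_right, abs_mul, abs_of_pos hδ, mul_div_cancel_left₀ _ hδ.ne']
    have := intervalIntegral.smul_integral_comp_mul_add (a := -1) (b := 1)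
      (fun y => γ (|y - x| / δ) * H (y - x)) δ x
    simp only [hF] at this
    rw [← smul_eq_mul, this]
    ring_nf
  have hneg : ∫ s in (-1)..0, g s = ∫ s in Ioc 0 1, γ s * H (-(δ * s)) := by
    have := intervalIntegral.integral_comp_neg (a := 0) (b := 1) g
    rw [neg_zero] at this
    rw [← this, intervalIntegral.integral_of_le zero_le_one]
    exact setIntegral_congr_fun measurableSet_Ioc hg_neg
  have hpos : ∫ s in (0 : ℝ)..1, g s = ∫ s in Ioc 0 1, γ s * H (δ * s) := by
    rw [intervalIntegral.integral_of_le zero_le_one]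
    exact setIntegral_congr_fun measurableSet_Ioc hg
  rw [hcov, ← intervalIntegral.integral_add_adjacent_intervals hgm hgp, hneg, hpos, add_comm,
    ← integral_add hp hm]
  simp only [mul_add]

theorem eventually_forall_Ioc_mul {P : ℝ → Prop} (hP : ∀ᶠ h in 𝓝 0, P h) :
    ∀ᶠ δ in 𝓝 0, ∀ s ∈ Ioc (0 : ℝ) 1, P (δ * s) := by
  obtain ⟨ρ, hρ, hball⟩ := Metric.eventually_nhds_iff.1 hP
  filter_upwards [Metric.ball_mem_nhds 0 hρ] with δ hδ s hs
  refine hball ?_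
  rw [Metric.mem_ball, dist_zero_right] at hδ
  rw [dist_zero_right, norm_mul]
  calc ‖δ‖ * ‖s‖ ≤ ‖δ‖ * 1 := by
        gcongr
        rw [Real.norm_of_nonneg hs.1.le]
        exact hs.2
    _ < ρ := by rwa [mul_one]

section Scaling

variable {γ f : ℝ → ℝ}

theorem eventually_aestronglyMeasurable_and_norm_mul_comp_le {n : ℕ} (hn : n ≠ 0)
    (hγ : AEStronglyMeasurable γ (volume.restrict (Ioc 0 1)))
    (hf : f =O[𝓝 0] (· ^ n)) (hfc : ∀ᶠ h in 𝓝 0, ContinuousAt f h) :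
    ∃ K, ∀ᶠ δ in 𝓝 0,
      AEStronglyMeasurable (fun s => γ s * f (δ * s)) (volume.restrict (Ioc 0 1)) ∧
      ∀ s ∈ Ioc (0 : ℝ) 1, ‖γ s * f (δ * s)‖ ≤ K * |δ| ^ n * ‖s * γ s‖ := by
  obtain ⟨K, hK0, hK⟩ := hf.exists_nonneg
  refine ⟨K, ?_⟩
  filter_upwards [eventually_forall_Ioc_mul (hK.bound.and hfc)] with δ hδ
  refine ⟨hγ.mul (ContinuousOn.aestronglyMeasurable (fun s hs => ((hδ s hs).2.comp
    (continuous_const_mul δ).continuousAt).continuousWithinAt) measurableSet_Ioc), fun s hs => ?_⟩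
  have hs0 : 0 ≤ s := hs.1.le
  calc ‖γ s * f (δ * s)‖ = |γ s| * ‖f (δ * s)‖ := by rw [norm_mul, Real.norm_eq_abs]
    _ ≤ |γ s| * (K * ‖(δ * s) ^ n‖) := by gcongr; exact (hδ s hs).1
    _ = K * |δ| ^ n * (s ^ n * |γ s|) := by
        rw [norm_pow, norm_mul, Real.norm_eq_abs, Real.norm_of_nonneg hs0]; ring
    _ ≤ K * |δ| ^ n * (s * |γ s|) := by gcongr; exact pow_le_of_le_one hs0 hs.2 hn
    _ = K * |δ| ^ n * ‖s * γ s‖ := by rw [norm_mul, Real.norm_of_nonneg hs0, Real.norm_eq_abs]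

theorem eventually_integrableOn_mul_comp (hγ : AEStronglyMeasurable γ (volume.restrict (Ioc 0 1)))
    (hint : IntegrableOn (fun s => s * γ s) (Ioc 0 1)) (hf : f =O[𝓝 0] id)
    (hfc : ∀ᶠ h in 𝓝 0, ContinuousAt f h) :
    ∀ᶠ δ in 𝓝 0, IntegrableOn (fun s => γ s * f (δ * s)) (Ioc 0 1) := by
  obtain ⟨K, hK⟩ := eventually_aestronglyMeasurable_and_norm_mul_comp_le one_ne_zero hγ
    (by simp only [pow_one]; exact hf) hfc
  filter_upwards [hK] with δ ⟨hmeas, hle⟩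
  exact (hint.norm.const_mul (K * |δ| ^ 1)).mono' hmeas
    ((ae_restrict_iff' measurableSet_Ioc).2 (.of_forall hle))

theorem tendsto_integral_mul_comp_div_sq {G : ℝ → ℝ} {A : ℝ}
    (hγ : AEStronglyMeasurable γ (volume.restrict (Ioc 0 1)))
    (hint : IntegrableOn (fun s => s * γ s) (Ioc 0 1))
    (hG : Tendsto (fun h => G h / h ^ 2) (𝓝[≠] 0) (𝓝 A)) (hG0 : G 0 = 0)
    (hGc : ∀ᶠ h in 𝓝 0, ContinuousAt G h) :
    Tendsto (fun δ => ∫ s in Ioc 0 1, γ s * G (δ * s) / δ ^ 2) (𝓝[≠] 0)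
      (𝓝 ((∫ s in Ioc 0 1, s ^ 2 * γ s) * A)) := by
  have hGO : G =O[𝓝 0] (· ^ 2) := by
    rw [← nhdsNE_sup_pure]
    exact (isBigO_of_div_tendsto_nhds (eventually_nhdsWithin_of_forall
      fun h (hh : h ≠ 0) hsq => absurd hsq (pow_ne_zero 2 hh)) A hG).sup
      (isBigO_pure.2 fun _ => hG0)
  obtain ⟨K, hK⟩ := eventually_aestronglyMeasurable_and_norm_mul_comp_le two_ne_zero hγ hGO hGc
  rw [← integral_mul_const]
  refine tendsto_integral_filter_of_dominated_convergence (fun s => K * ‖s * γ s‖) ?_ ?_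
    (hint.norm.const_mul K) ?_
  · filter_upwards [nhdsWithin_le_nhds hK] with δ hδ
    simpa only [div_eq_mul_inv] using hδ.1.mul_const _
  · filter_upwards [nhdsWithin_le_nhds hK, self_mem_nhdsWithin] with δ hδ (hδ0 : δ ≠ 0)
    refine (ae_restrict_iff' measurableSet_Ioc).2 (.of_forall fun s hs => ?_)
    rw [norm_div, norm_pow, Real.norm_eq_abs δ, div_le_iff₀ (by positivity)]
    linarith [hδ.2 s hs]
  · refine (ae_restrict_iff' measurableSet_Ioc).2 (.of_forall fun s (hs : s ∈ Ioc 0 1) => ?_)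
    have hscale : Tendsto (fun δ => δ * s) (𝓝[≠] 0) (𝓝[≠] 0) :=
      tendsto_nhdsWithin_iff.2 ⟨((continuous_mul_const s).tendsto' 0 0 (zero_mul s)).mono_left
        nhdsWithin_le_nhds, eventually_nhdsWithin_of_forall fun δ hδ => mul_ne_zero hδ hs.1.ne'⟩
    refine ((hG.comp hscale).const_mul (s ^ 2 * γ s)).congr'
      (eventually_nhdsWithin_of_forall fun δ (hδ : δ ≠ 0) => ?_)
    have := hs.1.ne'
    simp only [Function.comp]
    field_simp

theorem tendsto_radial_integral_div_cube {H : ℝ → ℝ} {A : ℝ} (x : ℝ)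
    (hγ : AEStronglyMeasurable γ (volume.restrict (Ioc 0 1)))
    (hint : IntegrableOn (fun s => s * γ s) (Ioc 0 1))
    (hH : H =O[𝓝 0] id) (hHc : ∀ᶠ h in 𝓝 0, ContinuousAt H h)
    (hG : Tendsto (fun h => (H h + H (-h)) / h ^ 2) (𝓝[≠] 0) (𝓝 A)) :
    Tendsto (fun δ => (δ ^ 3)⁻¹ * ∫ y in (x - δ)..(x + δ), γ (|y - x| / δ) * H (y - x))
      (𝓝[>] 0) (𝓝 ((∫ s in Ioc 0 1, s ^ 2 * γ s) * A)) := by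
  have hH0 : H 0 = 0 :=
    IsBigO.eq_zero_of_norm_pow (x₀ := 0) (n := 1) (by simpa using hH.norm_right) one_ne_zero
  have hneg : Tendsto (fun h : ℝ => -h) (𝓝 0) (𝓝 0) := continuous_neg.tendsto' 0 0 neg_zero
  have hGc : ∀ᶠ h in 𝓝 0, ContinuousAt (fun h => H h + H (-h)) h :=
    (hHc.and (hneg.eventually hHc)).mono fun h hh =>
      hh.1.add (hh.2.comp continuous_neg.continuousAt)
  have hp := eventually_integrableOn_mul_comp hγ hint hH hHc
  have hm : ∀ᶠ δ in 𝓝 0, IntegrableOn (fun s => γ s * H (-(δ * s))) (Ioc 0 1) := by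
    simpa only [neg_mul] using hneg.eventually hp
  have hG0 : H 0 + H (-0) = 0 := by rw [neg_zero, hH0, add_zero]
  refine ((tendsto_integral_mul_comp_div_sq hγ hint hG hG0 hGc).mono_left
    (nhdsGT_le_nhdsNE 0)).congr' ?_
  filter_upwards [self_mem_nhdsWithin, nhdsWithin_le_nhds hp, nhdsWithin_le_nhds hm]
    with δ (hδ : 0 < δ) hpδ hmδ
  rw [intervalIntegral_radial_eq_integral_Ioc γ H x hδ hpδ hmδ, integral_div]
  field_simp

end Scaling

theorem tendsto_radial_integral_coeff_mul_div_cube {γ c u : ℝ → ℝ} {x a : ℝ}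
    (hγ : AEStronglyMeasurable γ (volume.restrict (Ioc 0 1)))
    (hint : IntegrableOn (fun s => s * γ s) (Ioc 0 1))
    (hc : Continuous c) (hca : HasDerivAt c a x) (hu : ContDiffAt ℝ 2 u x) :
    Tendsto (fun δ => (δ ^ 3)⁻¹ * ∫ y in (x - δ)..(x + δ), c y * γ (|y - x| / δ) * (u y - u x))
      (𝓝[>] 0)
      (𝓝 ((∫ s in Ioc 0 1, s ^ 2 * γ s) * (c x * deriv (deriv u) x + 2 * a * deriv u x))) := by
  have hud : ∀ᶠ y in 𝓝 x, DifferentiableAt ℝ u y :=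
    (hu.eventually (by simp)).mono fun y hy => hy.differentiableAt (by norm_num)
  have hu'' : HasDerivAt (deriv u) (deriv (deriv u) x) x :=
    ((hu.derivWithin (m := 1) (by norm_num)).differentiableAt (by norm_num)).hasDerivAt
  have hw : HasDerivAt (fun y => u y - u x) (deriv u x) x := hud.self_of_nhds.hasDerivAt.sub_const _
  set H : ℝ → ℝ := fun h => c (x + h) * (u (x + h) - u x)
  have hHO : H =O[𝓝 0] id := by
    have hH : HasDerivAt H (a * (u (x + 0) - u x) + c (x + 0) * deriv u x) 0 :=
      (HasDerivAt.comp_const_add x 0 (by rwa [add_zero])).mul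
        (HasDerivAt.comp_const_add x 0 (by rwa [add_zero]) :
          HasDerivAt (fun h => u (x + h) - u x) (deriv u x) 0)
    have hH0 : H 0 = 0 := by simp [H]
    have := hH.isBigO_sub
    simp only [hH0, sub_zero] at this
    exact this
  have hHc : ∀ᶠ h in 𝓝 0, ContinuousAt H h :=
    ((continuous_const_add x).tendsto' 0 x (add_zero x)).eventually hud |>.mono fun h hh =>
      (hc.comp (continuous_const_add x)).continuousAt.mul
        ((hh.continuousAt.comp (continuous_const_add x).continuousAt).sub continuousAt_const)
  have hG : Tendsto (fun h => (H h + H (-h)) / h ^ 2) (𝓝[≠] 0)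
      (𝓝 (c x * deriv (deriv u) x + 2 * a * deriv u x)) :=
    (tendsto_second_symmDiff_mul hca hw (sub_self _)
      ((tendsto_second_symmDiff hud hu'').congr fun h => by ring)).congr
      fun h => by rw [sub_eq_add_neg x h]
  refine (tendsto_radial_integral_div_cube x hγ hint hHO hHc hG).congr fun δ => ?_
  have hH : ∀ y, γ (|y - x| / δ) * H (y - x) = c y * γ (|y - x| / δ) * (u y - u x) :=
    fun y => by simp only [H, add_sub_cancel]; ring
  simp only [hH]

theorem stmt_1 (γ : ℝ → ℝ) (hγmeas : Measurable γ)
    (hint : IntegrableOn (fun s : ℝ => s * γ s) (Set.Ioc 0 1))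
    (M : ℝ) (hM : M = 2 * ∫ s in Set.Ioc (0 : ℝ) 1, s ^ 2 * γ s)
    (C : ℝ → ℝ → ℝ) (hC : ContDiff ℝ 1 (fun p : ℝ × ℝ => C p.1 p.2))
    (hCsym : ∀ x y : ℝ, C x y = C y x)
    (σ : ℝ → ℝ) (hσ : ∀ t : ℝ, σ t = C t t)
    (x : ℝ) (u : ℝ → ℝ)
    (s : Set ℝ) (hs : s ∈ nhds x) (hu : ContDiffOn ℝ 2 u s) :
    Filter.Tendsto
      (fun δ : ℝ =>
        (δ ^ 3)⁻¹ * ∫ y in (x - δ)..(x + δ), C x y * γ (|y - x| / δ) * (u y - u x))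
      (nhdsWithin 0 (Set.Ioi 0))
      (nhds ((M / 2) * (σ x * deriv (deriv u) x + deriv σ x * deriv u x))) := by
  have hCx : ContDiff ℝ 1 (C x) := hC.comp (contDiff_const.prodMk contDiff_id)
  have ha : HasDerivAt (C x) (deriv (C x) x) x := (hCx.differentiable one_ne_zero x).hasDerivAt
  have hσ' : deriv σ x = 2 * deriv (C x) x := by
    rw [show σ = fun t => C t t from funext hσ]
    exact (hasDerivAt_diag_of_symm (hC.differentiable one_ne_zero _) hCsym ha).deriv
  have hval : M / 2 * (σ x * deriv (deriv u) x + deriv σ x * deriv u x) =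
      (∫ s in Ioc 0 1, s ^ 2 * γ s) *
        (C x x * deriv (deriv u) x + 2 * deriv (C x) x * deriv u x) := by
    rw [hσ, hσ', hM]; ring
  rw [hval]
  exact tendsto_radial_integral_coeff_mul_div_cube hγmeas.aestronglyMeasurable hint hCx.continuous
    ha (hu.contDiffAt hs)
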